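/- For n = 2m even with m ≥ 1, the stabilization of the configuration with n chips at the origin of Z is the configuration with one chip at each vertex in [-m, -1] ∪ [1, m]. -/
import Mathlib

set_option maxHeartbeats 4000000

/-- `c'` is obtained from `c` by firing at vertex `j`. -/
def FireAt (c : ℤ → ℕ) (j : ℤ) (c' : ℤ → ℕ) : Prop :=
  2 ≤ c j ∧ c' (j - 1) = c (j - 1) + 1 ∧ c' (j + 1) = c (j + 1) + 1 ∧ c' j = c j - 2 ∧
    ∀ i : ℤ, i ≠ j - 1 → i ≠ j → i ≠ j + 1 → c' i = c i

/-- a single chip-firing move -/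
def Step (c c' : ℤ → ℕ) : Prop := ∃ j, FireAt c j c'

/-- reachability by a (possibly empty) sequence of firings -/
def Reaches : (ℤ → ℕ) → (ℤ → ℕ) → Prop := Relation.ReflTransGen Step

/-- a configuration is stable if no vertex has two chips -/
def Stable (c : ℤ → ℕ) : Prop := ∀ i : ℤ, c i ≤ 1

/-- indicator of the interval `[a,b]` -/
def ind (a b x : ℤ) : ℕ := if a ≤ x ∧ x ≤ b then 1 else 0

lemma reaches_add {c d : ℤ → ℕ} (e : ℤ → ℕ) (h : Reaches c d) :
    Reaches (fun i => c i + e i) (fun i => d i + e i) := by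
  induction h with
  | refl => exact Relation.ReflTransGen.refl
  | @tail b c' _ hstep ih =>
    refine ih.tail ?_
    obtain ⟨j, h1, h2, h3, h4, h5⟩ := hstep
    refine ⟨j, ?_, ?_, ?_, ?_, ?_⟩
    · show 2 ≤ b j + e j; omega
    · show c' (j - 1) + e (j - 1) = b (j - 1) + e (j - 1) + 1; omega
    · show c' (j + 1) + e (j + 1) = b (j + 1) + e (j + 1) + 1; omega
    · show c' j + e j = b j + e j - 2; omega
    · intro i g1 g2 g3
      show c' i + e i = b i + e i
      rw [h5 i g1 g2 g3]

lemma reaches_neg {c d : ℤ → ℕ} (h : Reaches c d) :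
    Reaches (fun i => c (-i)) (fun i => d (-i)) := by
  induction h with
  | refl => exact Relation.ReflTransGen.refl
  | @tail b c' _ hstep ih =>
    refine ih.tail ?_
    obtain ⟨j, h1, h2, h3, h4, h5⟩ := hstep
    refine ⟨-j, ?_, ?_, ?_, ?_, ?_⟩
    · show 2 ≤ b (- -j); simpa using h1
    · show c' (-(-j - 1)) = b (-(-j - 1)) + 1
      rw [show -(-j - 1) = j + 1 by ring]; exact h3
    · show c' (-(-j + 1)) = b (-(-j + 1)) + 1
      rw [show -(-j + 1) = j - 1 by ring]; exact h2
    · show c' (- -j) = b (- -j) - 2; simpa using h4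
    · intro i g1 g2 g3
      show c' (-i) = b (-i)
      exact h5 (-i) (by omega) (by omega) (by omega)

/-- the rightward wave: 1 chip on `[1,k]` plus an extra chip at `k` stabilizes locally
to one chip at `0` and one chip on `[2,k+1]`. -/
lemma wave : ∀ k : ℕ, 1 ≤ k →
    Reaches (fun x => ind 1 k x + if x = (k : ℤ) then 1 else 0)
      (fun x => ind 2 (k + 1) x + if x = 0 then 1 else 0) := by
  intro k
  induction k with
  | zero => omega
  | succ k ih =>
    intro _
    by_cases hk : 1 ≤ k
    · have h2 := reaches_add (fun x => if x = (k : ℤ) + 2 then 1 else 0) (ih hk)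
      have e1 : (fun x => (ind 2 (k + 1) x + if x = 0 then 1 else 0) +
            (if x = (k : ℤ) + 2 then 1 else 0)) =
          (fun x => ind 2 ((k + 1 : ℕ) + 1) x + if x = 0 then 1 else 0) := by
        funext x; simp only [ind]; split_ifs <;> omega
      rw [e1] at h2
      refine Relation.ReflTransGen.head ⟨(k : ℤ) + 1, ?_, ?_, ?_, ?_, ?_⟩ h2
      · simp only [ind]; split_ifs <;> omega
      · simp only [ind]; split_ifs <;> omega
      · simp only [ind]; split_ifs <;> omega
      · simp only [ind]; split_ifs <;> omega
      · intro i g1 g2 g3; simp only [ind]; split_ifs <;> omega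
    · have hk0 : k = 0 := by omega
      subst hk0
      refine Relation.ReflTransGen.single ⟨1, ?_, ?_, ?_, ?_, ?_⟩
      · simp only [ind]; norm_num
      · simp only [ind]; norm_num
      · simp only [ind]; norm_num
      · simp only [ind]; norm_num
      · intro i g1 g2 g3; simp only [ind]; split_ifs <;> omega

/-- intermediate configuration: one chip on `[-m,-1] ∪ [1,m]` plus extra chips at `±k` -/
def interA (m k : ℕ) : ℤ → ℕ := fun x =>
  ind (-(m : ℤ)) (-1) x + ind 1 m x +
    ((if x = (k : ℤ) then 1 else 0) + (if x = -(k : ℤ) then 1 else 0))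

lemma kstep (m k : ℕ) (hk : 1 ≤ k) (hkm : k ≤ m) :
    Reaches (interA m k) (interA m (k + 1)) := by
  have hw := wave k hk
  have hwn := reaches_neg hw
  have h1 := reaches_add
    (fun x => (ind 1 k (-x) + if -x = (k : ℤ) then 1 else 0) +
      (ind ((k : ℤ) + 1) m x + ind (-(m : ℤ)) (-(k : ℤ) - 1) x)) hw
  have h2 := reaches_add
    (fun x => (ind 2 (k + 1) x + if x = 0 then 1 else 0) +
      (ind ((k : ℤ) + 1) m x + ind (-(m : ℤ)) (-(k : ℤ) - 1) x)) hwn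
  have eA : interA m k = (fun x => (ind 1 k x + if x = (k : ℤ) then 1 else 0) +
      ((ind 1 k (-x) + if -x = (k : ℤ) then 1 else 0) +
        (ind ((k : ℤ) + 1) m x + ind (-(m : ℤ)) (-(k : ℤ) - 1) x))) := by
    funext x; simp only [interA, ind]; split_ifs <;> omega
  have e12 : (fun x => (ind 1 k x + if x = (k : ℤ) then 1 else 0) +
        ((ind 1 k (-x) + if -x = (k : ℤ) then 1 else 0) +
          (ind ((k : ℤ) + 1) m x + ind (-(m : ℤ)) (-(k : ℤ) - 1) x))) =
      (fun x => (ind 1 k (-x) + if -x = (k : ℤ) then 1 else 0) +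
        ((ind 1 k x + if x = (k : ℤ) then 1 else 0) +
          (ind ((k : ℤ) + 1) m x + ind (-(m : ℤ)) (-(k : ℤ) - 1) x))) := by
    funext x; ring
  have step3 : Reaches
      (fun x => (ind 2 (k + 1) (-x) + if -x = 0 then 1 else 0) +
        ((ind 2 (k + 1) x + if x = 0 then 1 else 0) +
          (ind ((k : ℤ) + 1) m x + ind (-(m : ℤ)) (-(k : ℤ) - 1) x)))
      (interA m (k + 1)) := by
    refine Relation.ReflTransGen.single ⟨0, ?_, ?_, ?_, ?_, ?_⟩
    · simp only [ind]; split_ifs <;> omega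
    · simp only [interA, ind]; split_ifs <;> omega
    · simp only [interA, ind]; split_ifs <;> omega
    · simp only [interA, ind]; split_ifs <;> omega
    · intro i g1 g2 g3; simp only [interA, ind]; split_ifs <;> omega
  -- chain up: from interA m k, do the right wave, then the left wave, then fire at 0
  have base : Reaches (interA m k)
      (fun x => (ind 2 (k + 1) x + if x = 0 then 1 else 0) +
        ((ind 1 k (-x) + if -x = (k : ℤ) then 1 else 0) +
          (ind ((k : ℤ) + 1) m x + ind (-(m : ℤ)) (-(k : ℤ) - 1) x))) := by
    rw [eA]; exact h1
  have swap : (fun x => (ind 2 (k + 1) x + if x = 0 then 1 else 0) +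
        ((ind 1 k (-x) + if -x = (k : ℤ) then 1 else 0) +
          (ind ((k : ℤ) + 1) m x + ind (-(m : ℤ)) (-(k : ℤ) - 1) x))) =
      (fun x => (ind 1 k (-x) + if -x = (k : ℤ) then 1 else 0) +
        ((ind 2 (k + 1) x + if x = 0 then 1 else 0) +
          (ind ((k : ℤ) + 1) m x + ind (-(m : ℤ)) (-(k : ℤ) - 1) x))) := by
    funext x; ring
  have swap2 : (fun x => (ind 2 (k + 1) (-x) + if -x = 0 then 1 else 0) +
        ((ind 2 (k + 1) x + if x = 0 then 1 else 0) +
          (ind ((k : ℤ) + 1) m x + ind (-(m : ℤ)) (-(k : ℤ) - 1) x))) =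
      (fun x => (ind 2 (k + 1) (-x) + if -x = 0 then 1 else 0) +
        ((ind 2 (k + 1) x + if x = 0 then 1 else 0) +
          (ind ((k : ℤ) + 1) m x + ind (-(m : ℤ)) (-(k : ℤ) - 1) x))) := rfl
  refine (base.trans ?_).trans step3
  rw [swap]
  exact h2
lemma ksteps (m : ℕ) (hm : 1 ≤ m) : ∀ k : ℕ, 1 ≤ k → k ≤ m + 1 →
    Reaches (interA m 1) (interA m k) := by
  intro k
  induction k with
  | zero => omega
  | succ k ih =>
    intro _ hk2
    by_cases hk : 1 ≤ k
    · exact (ih hk (by omega)).trans (kstep m k hk (by omega))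
    · have : k = 0 := by omega
      subst this
      exact Relation.ReflTransGen.refl

lemma main_reach : ∀ m : ℕ, 1 ≤ m →
    Reaches (fun x => if x = 0 then 2 * m else 0)
      (fun x => ind (-(m : ℤ)) (-1) x + ind 1 m x) := by
  intro m
  induction m with
  | zero => omega
  | succ m ih =>
    intro _
    have fire0 : Reaches (fun x => if x = 0 then 2 * (m + 1) else 0)
        (fun x => (if x = 0 then 2 * m else 0) +
          ((if x = (-1 : ℤ) then 1 else 0) + (if x = (1 : ℤ) then 1 else 0))) := by
      refine Relation.ReflTransGen.single ⟨0, ?_, ?_, ?_, ?_, ?_⟩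
      · simp only []; norm_num
      · simp only []; norm_num
      · simp only []; norm_num
      · simp only []; norm_num; omega
      · intro i g1 g2 g3; simp only []; split_ifs <;> omega
    by_cases hm : 1 ≤ m
    · have h1 := reaches_add
        (fun x => (if x = (-1 : ℤ) then 1 else 0) + (if x = (1 : ℤ) then 1 else 0)) (ih hm)
      have e1 : (fun x => (ind (-(m : ℤ)) (-1) x + ind 1 m x) +
            ((if x = (-1 : ℤ) then 1 else 0) + (if x = (1 : ℤ) then 1 else 0))) =
          interA m 1 := by
        funext x; simp only [interA, ind]; split_ifs <;> omega
      rw [e1] at h1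
      have h2 := ksteps m hm (m + 1) (by omega) (by omega)
      have e2 : interA m (m + 1) =
          (fun x => ind (-((m + 1 : ℕ) : ℤ)) (-1) x + ind 1 ((m + 1 : ℕ) : ℤ) x) := by
        funext x; simp only [interA, ind]; split_ifs <;> omega
      exact (fire0.trans h1).trans (e2 ▸ h2)
    · have : m = 0 := by omega
      subst this
      refine fire0.trans ?_
      have e : (fun x => (if x = 0 then 2 * 0 else 0) +
            ((if x = (-1 : ℤ) then 1 else 0) + (if x = (1 : ℤ) then 1 else 0))) =
          (fun x => ind (-((0 + 1 : ℕ) : ℤ)) (-1) x + ind 1 ((0 + 1 : ℕ) : ℤ) x) := by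
        funext x; simp only [ind]; split_ifs <;> omega
      rw [e]

-- ### uniqueness of the stable configuration ###


/-- the result of firing at `j` -/
def fireFn (c : ℤ → ℕ) (j : ℤ) : ℤ → ℕ :=
  fun i => if i = j then c j - 2 else if i = j - 1 then c i + 1 else if i = j + 1 then c i + 1 else c i

lemma fireAt_fireFn (c : ℤ → ℕ) (j : ℤ) (h : 2 ≤ c j) : FireAt c j (fireFn c j) := by
  refine ⟨h, ?_, ?_, ?_, ?_⟩
  · simp only [fireFn]; split_ifs with h1 h2 <;> first | rfl | omega
  · simp only [fireFn]; split_ifs with h1 h2 <;> first | rfl | omega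
  · simp only [fireFn]; split_ifs <;> first | rfl | omega
  · intro i h1 h2 h3; simp only [fireFn]; split_ifs with g1 g2 <;> first | rfl | omega

lemma fireAt_eq {c c' : ℤ → ℕ} {j : ℤ} (h : FireAt c j c') : c' = fireFn c j := by
  obtain ⟨h1, h2, h3, h4, h5⟩ := h
  funext i
  simp only [fireFn]
  split_ifs with g1 g2 g3
  · subst g1; exact h4
  · subst g2; exact h2
  · subst g3; exact h3
  · exact h5 i g2 g1 g3

lemma fireFn_comm (c : ℤ → ℕ) (j j' : ℤ) (hne : j ≠ j') (hj : 2 ≤ c j) (hj' : 2 ≤ c j') :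
    fireFn (fireFn c j) j' = fireFn (fireFn c j') j := by
  funext i
  simp only [fireFn]
  split_ifs <;> omega

lemma fireFn_ge (c : ℤ → ℕ) (j j' : ℤ) (hne : j ≠ j') (hj' : 2 ≤ c j') :
    2 ≤ fireFn c j j' := by
  simp only [fireFn]; split_ifs <;> omega

lemma strong_confluence {c a b : ℤ → ℕ} (ha : Step c a) (hb : Step c b) :
    ∃ d, Relation.ReflGen Step a d ∧ Relation.ReflTransGen Step b d := by
  obtain ⟨j, hja⟩ := ha
  obtain ⟨j', hjb⟩ := hb
  by_cases hne : j = j'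
  · subst hne
    refine ⟨a, Relation.ReflGen.refl, ?_⟩
    rw [fireAt_eq hja] at *
    rw [fireAt_eq hjb]
  · refine ⟨fireFn (fireFn c j) j', Relation.ReflGen.single ?_, Relation.ReflTransGen.single ?_⟩
    · rw [fireAt_eq hja]
      exact ⟨j', fireAt_fireFn _ _ (fireFn_ge c j j' hne hjb.1)⟩
    · rw [fireAt_eq hjb, fireFn_comm c j j' hne hja.1 hjb.1]
      exact ⟨j, fireAt_fireFn _ _ (fireFn_ge c j' j (Ne.symm hne) hja.1)⟩

lemma stable_no_step {d e : ℤ → ℕ} (hs : Stable d) (h : Reaches d e) : d = e := by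
  induction h using Relation.ReflTransGen.head_induction_on with
  | refl => rfl
  | head hstep _ _ =>
    obtain ⟨j, hj, _⟩ := hstep
    exact absurd (hs j) (by omega)

lemma stable_unique {c d1 d2 : ℤ → ℕ} (h1 : Reaches c d1) (h2 : Reaches c d2)
    (s1 : Stable d1) (s2 : Stable d2) : d1 = d2 := by
  obtain ⟨e, he1, he2⟩ := Relation.church_rosser
    (fun a b c hab hac => strong_confluence hab hac) h1 h2
  rw [stable_no_step s1 he1, stable_no_step s2 he2]


theorem stmt_8 (n m : ℕ) (hm : 1 ≤ m) (hn : n = 2 * m)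
    (c : ℤ → ℕ) (hc : c = fun x => if x = 0 then n else 0)
    (d : ℤ → ℕ) (hd : Reaches c d) (hstable : Stable d) :
    d = fun x => if (-(m : ℤ) ≤ x ∧ x ≤ -1) ∨ (1 ≤ x ∧ x ≤ (m : ℤ)) then 1 else 0 := by
  subst hn hc
  have hreach := main_reach m hm
  have htar : Stable (fun x => ind (-(m : ℤ)) (-1) x + ind 1 m x) := by
    intro i; simp only [ind]; split_ifs <;> omega
  have hde := stable_unique hd hreach hstable htar
  rw [hde]
  funext x; simp only [ind]; split_ifs <;> omega
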